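/- arXiv:0809.4182 — 2 statements merged into one kernel-verified Lean document; each statement's English description precedes it below -/
import Mathlib

section
/- Let s > n/2. There exists a constant C = C(s) such that for all u, v in H_h^s(R^n) and all h in (0,1], the product uv belongs to H_h^s(R^n) and ‖uv‖_{H_h^s} ≤ C h^{-n/2} ‖u‖_{H_h^s} ‖v‖_{H_h^s}. -/
/-!
On the Fourier side the product `uv` is the convolution `f ⋆ g`. Peetre's inequality
`⟨hξ⟩ˢ ≤ 2ˢ (⟨hη⟩ˢ + ⟨h(ξ - η)⟩ˢ)` moves the weight onto one of the two factors,
`⟨hξ⟩ˢ |f ⋆ g| ≤ 2ˢ ((⟨h·⟩ˢ |f|) ⋆ |g| + |f| ⋆ (⟨h·⟩ˢ |g|))`, and Young's inequality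
`‖F ⋆ G‖₂ ≤ ‖F‖₂ ‖G‖₁` bounds each term. The `L¹` norm of the other factor is controlled by
Cauchy–Schwarz, `‖g‖₁ ≤ ‖⟨h·⟩⁻ˢ‖₂ ‖⟨h·⟩ˢ g‖₂`, and rescaling `ξ ↦ ξ / h` gives
`‖⟨h·⟩⁻ˢ‖₂² = h⁻ⁿ ∫ ⟨ξ⟩⁻²ˢ dξ`, which is finite exactly when `s > n / 2`.
-/

open MeasureTheory Convolution

open scoped ENNReal

theorem ENNReal.add_sq_le_two_mul (a b : ℝ≥0∞) : (a + b) ^ 2 ≤ 2 * (a ^ 2 + b ^ 2) := by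
  have := ENNReal.rpow_add_le_mul_rpow_add_rpow a b one_le_two
  norm_num [ENNReal.rpow_two] at this
  exact this

theorem ENNReal.add_rpow_le_two_rpow_mul (a b : ℝ≥0∞) {p : ℝ} (hp : 0 ≤ p) :
    (a + b) ^ p ≤ 2 ^ p * (a ^ p + b ^ p) := by
  wlog hab : a ≤ b generalizing a b
  · rw [add_comm a, add_comm (a ^ p)]
    exact this b a (le_of_not_ge hab)
  calc (a + b) ^ p ≤ (2 * b) ^ p := by
        gcongr
        rw [two_mul]
        gcongr
    _ = 2 ^ p * b ^ p := ENNReal.mul_rpow_of_nonneg _ _ hp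
    _ ≤ 2 ^ p * (a ^ p + b ^ p) := by gcongr; exact le_add_self

section CauchySchwarz

variable {α : Type*} [MeasurableSpace α] {μ : Measure α}

theorem ENNReal.lintegral_mul_sq_le {f g : α → ℝ≥0∞} (hf : AEMeasurable f μ)
    (hg : AEMeasurable g μ) :
    (∫⁻ a, f a * g a ∂μ) ^ 2 ≤ (∫⁻ a, f a ^ 2 ∂μ) * ∫⁻ a, g a ^ 2 ∂μ := by
  have hCS := ENNReal.lintegral_mul_le_Lp_mul_Lq μ Real.HolderConjugate.two_two hf hg
  simp only [Pi.mul_apply, ENNReal.rpow_two] at hCS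
  calc (∫⁻ a, f a * g a ∂μ) ^ 2
      ≤ ((∫⁻ a, f a ^ 2 ∂μ) ^ (1 / 2 : ℝ) * (∫⁻ a, g a ^ 2 ∂μ) ^ (1 / 2 : ℝ)) ^ 2 :=
        pow_le_pow_left' hCS 2
    _ = (∫⁻ a, f a ^ 2 ∂μ) * ∫⁻ a, g a ^ 2 ∂μ := by
        rw [mul_pow, ← ENNReal.rpow_two, ← ENNReal.rpow_two, ← ENNReal.rpow_mul,
          ← ENNReal.rpow_mul]
        norm_num

theorem ENNReal.lintegral_sq_le_lintegral_inv_sq_mul {w g : α → ℝ≥0∞} (hw : AEMeasurable w μ)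
    (hw0 : ∀ x, w x ≠ 0) (hwtop : ∀ x, w x ≠ ∞) (hg : AEMeasurable g μ) :
    (∫⁻ x, g x ∂μ) ^ 2 ≤ (∫⁻ x, (w x)⁻¹ ^ 2 ∂μ) * ∫⁻ x, (w x * g x) ^ 2 ∂μ := by
  have hCS := ENNReal.lintegral_mul_sq_le hw.inv (hw.mul hg)
  simpa only [Pi.mul_apply, Pi.inv_apply, ENNReal.inv_mul_cancel_left (hw0 _) (hwtop _)] using hCS

end CauchySchwarz

section LConvolution

variable {G : Type*} [MeasurableSpace G] [AddCommGroup G] [MeasurableAdd₂ G] [MeasurableNeg G]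
  {μ : Measure G} [μ.IsAddLeftInvariant]

theorem AEMeasurable.comp_neg_add [μ.IsNegInvariant] {g : G → ℝ≥0∞} (hg : AEMeasurable g μ)
    (x : G) : AEMeasurable (fun y => g (-y + x)) μ := by
  simp only [neg_add_eq_sub]
  exact hg.comp_quasiMeasurePreserving
    (Measure.measurePreserving_sub_left μ x).quasiMeasurePreserving

variable [SFinite μ]

theorem lintegral_lconvolution {f g : G → ℝ≥0∞} (hf : AEMeasurable f μ)
    (hg : AEMeasurable g μ) :
    ∫⁻ x, (f ⋆ₗ[μ] g) x ∂μ = (∫⁻ x, f x ∂μ) * ∫⁻ x, g x ∂μ := by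
  have hprod : AEMeasurable (Function.uncurry fun x y => f y * g (-y + x)) (μ.prod μ) := by
    fun_prop
  simp only [lconvolution_def]
  rw [lintegral_lintegral_swap hprod]
  calc ∫⁻ y, ∫⁻ x, f y * g (-y + x) ∂μ ∂μ = ∫⁻ y, f y * ∫⁻ x, g x ∂μ ∂μ := by
        refine lintegral_congr fun y => ?_
        have hgy : AEMeasurable (fun x => g (-y + x)) μ :=
          hg.comp_quasiMeasurePreserving (measurePreserving_add_left μ (-y)).quasiMeasurePreserving
        rw [lintegral_const_mul'' _ hgy, lintegral_add_left_eq_self]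
    _ = (∫⁻ x, f x ∂μ) * ∫⁻ x, g x ∂μ := lintegral_mul_const'' _ hf

theorem lintegral_lconvolution_sq_le [μ.IsNegInvariant] {f g : G → ℝ≥0∞}
    (hf : AEMeasurable f μ) (hg : AEMeasurable g μ) :
    ∫⁻ x, (f ⋆ₗ[μ] g) x ^ 2 ∂μ ≤ (∫⁻ x, f x ^ 2 ∂μ) * (∫⁻ x, g x ∂μ) ^ 2 := by
  have hpt : ∀ x, (f ⋆ₗ[μ] g) x ^ 2 ≤ ((f · ^ 2) ⋆ₗ[μ] g) x * ∫⁻ y, g y ∂μ := by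
    intro x
    have hgx := hg.comp_neg_add x
    have hsq : ∀ y, (g (-y + x) ^ (2⁻¹ : ℝ)) ^ 2 = g (-y + x) := fun y => by
      rw [← ENNReal.rpow_two, ENNReal.rpow_inv_rpow two_ne_zero]
    -- Cauchy–Schwarz for `f y * √g(x - y)` against `√g(x - y)`
    calc (f ⋆ₗ[μ] g) x ^ 2
        = (∫⁻ y, (f y * g (-y + x) ^ (2⁻¹ : ℝ)) * g (-y + x) ^ (2⁻¹ : ℝ) ∂μ) ^ 2 := by
          simp_rw [lconvolution_def, mul_assoc, ← sq, hsq]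
      _ ≤ (∫⁻ y, (f y * g (-y + x) ^ (2⁻¹ : ℝ)) ^ 2 ∂μ) *
            ∫⁻ y, (g (-y + x) ^ (2⁻¹ : ℝ)) ^ 2 ∂μ :=
          ENNReal.lintegral_mul_sq_le (hf.mul (hgx.pow_const _)) (hgx.pow_const _)
      _ = ((f · ^ 2) ⋆ₗ[μ] g) x * ∫⁻ y, g y ∂μ := by
          simp_rw [mul_pow, hsq, lconvolution_def, neg_add_eq_sub]
          rw [lintegral_sub_left_eq_self]
  calc ∫⁻ x, (f ⋆ₗ[μ] g) x ^ 2 ∂μ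
      ≤ ∫⁻ x, ((f · ^ 2) ⋆ₗ[μ] g) x * ∫⁻ y, g y ∂μ ∂μ := lintegral_mono hpt
    _ = (∫⁻ x, f x ^ 2 ∂μ) * (∫⁻ x, g x ∂μ) ^ 2 := by
        rw [lintegral_mul_const'' _ (aemeasurable_lconvolution (hf.pow_const 2) hg),
          lintegral_lconvolution (hf.pow_const 2) hg, sq, mul_assoc]

theorem lintegral_weight_mul_lconvolution_sq_le [μ.IsNegInvariant] {w : G → ℝ≥0∞} {c : ℝ≥0∞}
    (hc : c ≠ ∞) (hw : AEMeasurable w μ) (hw0 : ∀ x, w x ≠ 0) (hwtop : ∀ x, w x ≠ ∞)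
    (hw_add : ∀ x y, w (x + y) ≤ c * (w x + w y)) {f g : G → ℝ≥0∞} (hf : AEMeasurable f μ)
    (hg : AEMeasurable g μ) :
    ∫⁻ x, (w x * (f ⋆ₗ[μ] g) x) ^ 2 ∂μ ≤
      4 * c ^ 2 * (∫⁻ x, (w x)⁻¹ ^ 2 ∂μ) * (∫⁻ x, (w x * f x) ^ 2 ∂μ) *
        ∫⁻ x, (w x * g x) ^ 2 ∂μ := by
  set F := fun x => w x * f x
  set H := fun x => w x * g x
  have hF : AEMeasurable F μ := hw.mul hf
  have hH : AEMeasurable H μ := hw.mul hg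
  have hpt : ∀ x, w x * (f ⋆ₗ[μ] g) x ≤ c * ((F ⋆ₗ[μ] g) x + (H ⋆ₗ[μ] f) x) := by
    intro x
    calc w x * (f ⋆ₗ[μ] g) x = ∫⁻ y, w x * (f y * g (-y + x)) ∂μ :=
          (lintegral_const_mul' _ _ (hwtop x)).symm
      _ ≤ ∫⁻ y, c * (F y * g (-y + x) + f y * H (-y + x)) ∂μ := by
          refine lintegral_mono fun y => ?_
          have hsplit := hw_add y (-y + x)
          rw [add_neg_cancel_left] at hsplit
          calc w x * (f y * g (-y + x)) ≤ c * (w y + w (-y + x)) * (f y * g (-y + x)) := by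
                gcongr
            _ = c * (F y * g (-y + x) + f y * H (-y + x)) := by ring
      _ = c * ((F ⋆ₗ[μ] g) x + (H ⋆ₗ[μ] f) x) := by
          rw [lintegral_const_mul' _ _ hc,
            lintegral_add_left' (f := fun y => F y * g (-y + x)) (hF.mul (hg.comp_neg_add x)),
            lconvolution_comm (f := H)]
          rfl
  calc ∫⁻ x, (w x * (f ⋆ₗ[μ] g) x) ^ 2 ∂μ
      ≤ ∫⁻ x, 2 * c ^ 2 * ((F ⋆ₗ[μ] g) x ^ 2 + (H ⋆ₗ[μ] f) x ^ 2) ∂μ := by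
        refine lintegral_mono fun x => ?_
        calc (w x * (f ⋆ₗ[μ] g) x) ^ 2 ≤ (c * ((F ⋆ₗ[μ] g) x + (H ⋆ₗ[μ] f) x)) ^ 2 :=
              pow_le_pow_left' (hpt x) 2
          _ ≤ c ^ 2 * (2 * ((F ⋆ₗ[μ] g) x ^ 2 + (H ⋆ₗ[μ] f) x ^ 2)) := by
              rw [mul_pow]
              gcongr
              exact ENNReal.add_sq_le_two_mul _ _
          _ = 2 * c ^ 2 * ((F ⋆ₗ[μ] g) x ^ 2 + (H ⋆ₗ[μ] f) x ^ 2) := by ring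
    _ = 2 * c ^ 2 * (∫⁻ x, (F ⋆ₗ[μ] g) x ^ 2 ∂μ + ∫⁻ x, (H ⋆ₗ[μ] f) x ^ 2 ∂μ) := by
        rw [lintegral_const_mul' _ _ (by finiteness),
          lintegral_add_left' ((aemeasurable_lconvolution hF hg).pow_const 2)]
    _ ≤ 2 * c ^ 2 * ((∫⁻ x, F x ^ 2 ∂μ) * (∫⁻ x, g x ∂μ) ^ 2 +
          (∫⁻ x, H x ^ 2 ∂μ) * (∫⁻ x, f x ∂μ) ^ 2) := by
        gcongr
        · exact lintegral_lconvolution_sq_le hF hg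
        · exact lintegral_lconvolution_sq_le hH hf
    _ ≤ 2 * c ^ 2 * ((∫⁻ x, F x ^ 2 ∂μ) * ((∫⁻ x, (w x)⁻¹ ^ 2 ∂μ) * ∫⁻ x, H x ^ 2 ∂μ) +
          (∫⁻ x, H x ^ 2 ∂μ) * ((∫⁻ x, (w x)⁻¹ ^ 2 ∂μ) * ∫⁻ x, F x ^ 2 ∂μ)) := by
        gcongr
        · exact ENNReal.lintegral_sq_le_lintegral_inv_sq_mul hw hw0 hwtop hg
        · exact ENNReal.lintegral_sq_le_lintegral_inv_sq_mul hw hw0 hwtop hf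
    _ = 4 * c ^ 2 * (∫⁻ x, (w x)⁻¹ ^ 2 ∂μ) * (∫⁻ x, F x ^ 2 ∂μ) * ∫⁻ x, H x ^ 2 ∂μ := by ring

end LConvolution

theorem enorm_convolution_mul_le {G 𝕜 : Type*} [MeasurableSpace G] [AddCommGroup G] [RCLike 𝕜]
    (μ : Measure G) (f g : G → 𝕜) (x : G) :
    ‖(f ⋆[ContinuousLinearMap.mul ℝ 𝕜, μ] g) x‖ₑ ≤ ((‖f ·‖ₑ) ⋆ₗ[μ] (‖g ·‖ₑ)) x := by
  rw [convolution_def, lconvolution_def]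
  refine (enorm_integral_le_lintegral_enorm _).trans_eq (lintegral_congr fun y => ?_)
  simp [neg_add_eq_sub]

section BracketWeight

variable {E : Type*} [NormedAddCommGroup E]

/-- `⟨hξ⟩ ^ s`; its square is the weight `(1 + h² ‖ξ‖²) ^ s` of the `H_h^s` norm. -/
noncomputable def bracketWeight (h s : ℝ) (ξ : E) : ℝ≥0∞ :=
  ENNReal.ofReal (1 + h ^ 2 * ‖ξ‖ ^ 2) ^ (s / 2)

theorem bracketWeight_ne_zero (h s : ℝ) (ξ : E) : bracketWeight h s ξ ≠ 0 :=
  (ENNReal.rpow_pos (ENNReal.ofReal_pos.2 (by positivity)) ENNReal.ofReal_ne_top).ne'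

theorem bracketWeight_ne_top (h s : ℝ) (ξ : E) : bracketWeight h s ξ ≠ ∞ :=
  ENNReal.rpow_ne_top_of_ne_zero (ENNReal.ofReal_pos.2 (by positivity)).ne' ENNReal.ofReal_ne_top

@[fun_prop]
theorem measurable_bracketWeight [MeasurableSpace E] [OpensMeasurableSpace E] (h s : ℝ) :
    Measurable (bracketWeight (E := E) h s) := by
  unfold bracketWeight
  fun_prop

theorem bracketWeight_inv (h s : ℝ) (ξ : E) :
    (bracketWeight h s ξ)⁻¹ = bracketWeight h (-s) ξ := by
  rw [bracketWeight, bracketWeight, ← ENNReal.rpow_neg, neg_div]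

theorem bracketWeight_sq (h s : ℝ) (ξ : E) :
    bracketWeight h s ξ ^ 2 = ENNReal.ofReal ((1 + h ^ 2 * ‖ξ‖ ^ 2) ^ s) := by
  rw [bracketWeight, ← ENNReal.rpow_two, ← ENNReal.rpow_mul, div_mul_cancel₀ _ two_ne_zero,
    ENNReal.ofReal_rpow_of_pos (by positivity)]

theorem bracketWeight_add_le {s : ℝ} (hs : 0 ≤ s) (h : ℝ) (ξ η : E) :
    bracketWeight h s (ξ + η) ≤ 2 ^ s * (bracketWeight h s ξ + bracketWeight h s η) := by
  have hreal : 1 + h ^ 2 * ‖ξ + η‖ ^ 2 ≤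
      2 * ((1 + h ^ 2 * ‖ξ‖ ^ 2) + (1 + h ^ 2 * ‖η‖ ^ 2)) := by
    have : ‖ξ + η‖ ^ 2 ≤ 2 * (‖ξ‖ ^ 2 + ‖η‖ ^ 2) :=
      (pow_le_pow_left₀ (norm_nonneg _) (norm_add_le ξ η) 2).trans add_sq_le
    nlinarith [mul_le_mul_of_nonneg_left this (sq_nonneg h)]
  have hbase : ENNReal.ofReal (1 + h ^ 2 * ‖ξ + η‖ ^ 2) ≤
      2 * (ENNReal.ofReal (1 + h ^ 2 * ‖ξ‖ ^ 2) + ENNReal.ofReal (1 + h ^ 2 * ‖η‖ ^ 2)) := by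
    rw [← ENNReal.ofReal_add (by positivity) (by positivity), ← ENNReal.ofReal_ofNat 2,
      ← ENNReal.ofReal_mul zero_le_two]
    exact ENNReal.ofReal_le_ofReal hreal
  have hs2 : 0 ≤ s / 2 := by positivity
  calc bracketWeight h s (ξ + η)
      ≤ (2 * (ENNReal.ofReal (1 + h ^ 2 * ‖ξ‖ ^ 2) +
          ENNReal.ofReal (1 + h ^ 2 * ‖η‖ ^ 2))) ^ (s / 2) :=
        ENNReal.rpow_le_rpow hbase hs2
    _ ≤ 2 ^ (s / 2) * (2 ^ (s / 2) * (bracketWeight h s ξ + bracketWeight h s η)) := by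
        rw [ENNReal.mul_rpow_of_nonneg _ _ hs2]
        gcongr
        exact ENNReal.add_rpow_le_two_rpow_mul _ _ hs2
    _ = 2 ^ s * (bracketWeight h s ξ + bracketWeight h s η) := by
        rw [← mul_assoc, ← ENNReal.rpow_add _ _ two_ne_zero ENNReal.ofNat_ne_top, add_halves]

theorem ofReal_rpow_mul_norm_sq {F : Type*} [NormedAddCommGroup F] (h s : ℝ) (ξ : E) (z : F) :
    ENNReal.ofReal ((1 + h ^ 2 * ‖ξ‖ ^ 2) ^ s * ‖z‖ ^ 2) = (bracketWeight h s ξ * ‖z‖ₑ) ^ 2 := by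
  rw [mul_pow, bracketWeight_sq, ENNReal.ofReal_mul (by positivity),
    ENNReal.ofReal_pow (norm_nonneg _), ofReal_norm]

section Integrals

variable [MeasurableSpace E] [OpensMeasurableSpace E] {F : Type*} [NormedAddCommGroup F]
  {μ : Measure E} {f : E → F}

theorem aestronglyMeasurable_rpow_mul_norm_sq (hf : AEStronglyMeasurable f μ) (h s : ℝ) :
    AEStronglyMeasurable (fun ξ => (1 + h ^ 2 * ‖ξ‖ ^ 2) ^ s * ‖f ξ‖ ^ 2) μ :=
  (Measurable.aestronglyMeasurable (by fun_prop)).mul (hf.norm.pow 2)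

theorem integral_rpow_mul_norm_sq_eq (hf : AEStronglyMeasurable f μ) (h s : ℝ) :
    ∫ ξ, (1 + h ^ 2 * ‖ξ‖ ^ 2) ^ s * ‖f ξ‖ ^ 2 ∂μ =
      (∫⁻ ξ, (bracketWeight h s ξ * ‖f ξ‖ₑ) ^ 2 ∂μ).toReal := by
  rw [integral_eq_lintegral_of_nonneg_ae (ae_of_all _ fun ξ => by positivity)
    (aestronglyMeasurable_rpow_mul_norm_sq hf h s)]
  simp_rw [ofReal_rpow_mul_norm_sq]

theorem integrable_rpow_mul_norm_sq_iff (hf : AEStronglyMeasurable f μ) (h s : ℝ) :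
    Integrable (fun ξ => (1 + h ^ 2 * ‖ξ‖ ^ 2) ^ s * ‖f ξ‖ ^ 2) μ ↔
      ∫⁻ ξ, (bracketWeight h s ξ * ‖f ξ‖ₑ) ^ 2 ∂μ < ∞ := by
  rw [Integrable, and_iff_right (aestronglyMeasurable_rpow_mul_norm_sq hf h s),
    hasFiniteIntegral_iff_ofReal (ae_of_all _ fun ξ => by positivity)]
  simp_rw [ofReal_rpow_mul_norm_sq]

end Integrals

end BracketWeight

section Sobolev

variable {E : Type*} [NormedAddCommGroup E] [NormedSpace ℝ E] [FiniteDimensional ℝ E]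
  [MeasurableSpace E] [BorelSpace E] (μ : Measure E) [μ.IsAddHaarMeasure]

theorem integrable_one_add_norm_sq_rpow_neg {s : ℝ} (hs : (Module.finrank ℝ E : ℝ) < 2 * s) :
    Integrable (fun ξ : E => (1 + ‖ξ‖ ^ 2) ^ (-s)) μ := by
  simpa [neg_div] using integrable_rpow_neg_one_add_norm_sq (μ := μ) hs

theorem integral_one_add_norm_sq_rpow_neg_pos {s : ℝ} (hs : (Module.finrank ℝ E : ℝ) < 2 * s) :
    0 < ∫ ξ, (1 + ‖ξ‖ ^ 2) ^ (-s) ∂μ := by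
  rw [integral_pos_iff_support_of_nonneg (fun ξ => by positivity)
      (integrable_one_add_norm_sq_rpow_neg μ hs),
    Function.support_eq_univ fun ξ => by positivity]
  exact NeZero.pos (μ Set.univ)

theorem integral_one_add_sq_mul_norm_sq_rpow {h : ℝ} (hh : 0 < h) (r : ℝ) :
    ∫ ξ, (1 + h ^ 2 * ‖ξ‖ ^ 2) ^ r ∂μ =
      h ^ (-(Module.finrank ℝ E : ℝ)) * ∫ ξ, (1 + ‖ξ‖ ^ 2) ^ r ∂μ := by
  have := Measure.integral_comp_smul_of_nonneg μ (fun ξ : E => (1 + ‖ξ‖ ^ 2) ^ r) h (hR := hh.le)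
  simp only [norm_smul, Real.norm_of_nonneg hh.le, mul_pow, smul_eq_mul] at this
  rw [this, Real.rpow_neg hh.le, Real.rpow_natCast]

theorem lintegral_bracketWeight_inv_sq {s : ℝ} (hs : (Module.finrank ℝ E : ℝ) < 2 * s) {h : ℝ}
    (hh : 0 < h) :
    ∫⁻ ξ, (bracketWeight h s ξ)⁻¹ ^ 2 ∂μ =
      ENNReal.ofReal (h ^ (-(Module.finrank ℝ E : ℝ)) * ∫ ξ, (1 + ‖ξ‖ ^ 2) ^ (-s) ∂μ) := by
  have hint_h : Integrable (fun ξ : E => (1 + h ^ 2 * ‖ξ‖ ^ 2) ^ (-s)) μ := by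
    simpa [norm_smul, Real.norm_of_nonneg hh.le, mul_pow] using
      (integrable_one_add_norm_sq_rpow_neg μ hs).comp_smul hh.ne'
  simp_rw [bracketWeight_inv, bracketWeight_sq]
  rw [← integral_one_add_sq_mul_norm_sq_rpow μ hh,
    ofReal_integral_eq_lintegral_ofReal hint_h (ae_of_all _ fun ξ => by positivity)]

theorem lintegral_bracketWeight_mul_convolution_sq_le {𝕜 : Type*} [RCLike 𝕜] {s : ℝ}
    (hs : (Module.finrank ℝ E : ℝ) < 2 * s) {h : ℝ} (hh : 0 < h) {f g : E → 𝕜}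
    (hf : AEStronglyMeasurable f μ) (hg : AEStronglyMeasurable g μ) :
    ∫⁻ ξ, (bracketWeight h s ξ * ‖(f ⋆[ContinuousLinearMap.mul ℝ 𝕜, μ] g) ξ‖ₑ) ^ 2 ∂μ ≤
      4 * (2 ^ s) ^ 2 *
          ENNReal.ofReal (h ^ (-(Module.finrank ℝ E : ℝ)) * ∫ ξ, (1 + ‖ξ‖ ^ 2) ^ (-s) ∂μ) *
        (∫⁻ ξ, (bracketWeight h s ξ * ‖f ξ‖ₑ) ^ 2 ∂μ) *
        ∫⁻ ξ, (bracketWeight h s ξ * ‖g ξ‖ₑ) ^ 2 ∂μ := by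
  have hs0 : 0 ≤ s := by linarith [(Module.finrank ℝ E).cast_nonneg (α := ℝ)]
  rw [← lintegral_bracketWeight_inv_sq μ hs hh]
  calc ∫⁻ ξ, (bracketWeight h s ξ * ‖(f ⋆[ContinuousLinearMap.mul ℝ 𝕜, μ] g) ξ‖ₑ) ^ 2 ∂μ
      ≤ ∫⁻ ξ, (bracketWeight h s ξ * ((‖f ·‖ₑ) ⋆ₗ[μ] (‖g ·‖ₑ)) ξ) ^ 2 ∂μ := by
        gcongr with ξ
        exact enorm_convolution_mul_le μ f g ξ
    _ ≤ _ := lintegral_weight_mul_lconvolution_sq_le (by finiteness)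
        (measurable_bracketWeight h s).aemeasurable (bracketWeight_ne_zero h s)
        (bracketWeight_ne_top h s) (bracketWeight_add_le hs0 h) hf.enorm hg.enorm

theorem integrable_rpow_mul_norm_convolution_sq_and_le {𝕜 : Type*} [RCLike 𝕜] {s : ℝ}
    (hs : (Module.finrank ℝ E : ℝ) < 2 * s) {h : ℝ} (hh : 0 < h) {f g : E → 𝕜}
    (hf : AEStronglyMeasurable f μ) (hg : AEStronglyMeasurable g μ)
    (hfi : Integrable (fun ξ => (1 + h ^ 2 * ‖ξ‖ ^ 2) ^ s * ‖f ξ‖ ^ 2) μ)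
    (hgi : Integrable (fun ξ => (1 + h ^ 2 * ‖ξ‖ ^ 2) ^ s * ‖g ξ‖ ^ 2) μ) :
    Integrable (fun ξ =>
        (1 + h ^ 2 * ‖ξ‖ ^ 2) ^ s * ‖(f ⋆[ContinuousLinearMap.mul ℝ 𝕜, μ] g) ξ‖ ^ 2) μ ∧
      (∫ ξ, (1 + h ^ 2 * ‖ξ‖ ^ 2) ^ s * ‖(f ⋆[ContinuousLinearMap.mul ℝ 𝕜, μ] g) ξ‖ ^ 2 ∂μ) ^
          (1 / 2 : ℝ) ≤
        (4 * (2 ^ s) ^ 2 * ∫ ξ, (1 + ‖ξ‖ ^ 2) ^ (-s) ∂μ) ^ (1 / 2 : ℝ) *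
          h ^ (-(Module.finrank ℝ E : ℝ) / 2) *
          ((∫ ξ, (1 + h ^ 2 * ‖ξ‖ ^ 2) ^ s * ‖f ξ‖ ^ 2 ∂μ) ^ (1 / 2 : ℝ) *
            (∫ ξ, (1 + h ^ 2 * ‖ξ‖ ^ 2) ^ s * ‖g ξ‖ ^ 2 ∂μ) ^ (1 / 2 : ℝ)) := by
  have hconv : AEStronglyMeasurable (f ⋆[ContinuousLinearMap.mul ℝ 𝕜, μ] g) μ :=
    (hf.convolution_integrand (ContinuousLinearMap.mul ℝ 𝕜) hg).integral_prod_right'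
  have hbound := lintegral_bracketWeight_mul_convolution_sq_le μ hs hh hf hg
  rw [integrable_rpow_mul_norm_sq_iff hf] at hfi
  rw [integrable_rpow_mul_norm_sq_iff hg] at hgi
  rw [integrable_rpow_mul_norm_sq_iff hconv, integral_rpow_mul_norm_sq_eq hf,
    integral_rpow_mul_norm_sq_eq hg, integral_rpow_mul_norm_sq_eq hconv]
  set d : ℝ := (Module.finrank ℝ E : ℝ)
  set J := ∫ ξ, (1 + ‖ξ‖ ^ 2) ^ (-s) ∂μ
  set A := ∫⁻ ξ, (bracketWeight h s ξ * ‖f ξ‖ₑ) ^ 2 ∂μ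
  set B := ∫⁻ ξ, (bracketWeight h s ξ * ‖g ξ‖ₑ) ^ 2 ∂μ
  set L := ∫⁻ ξ, (bracketWeight h s ξ * ‖(f ⋆[ContinuousLinearMap.mul ℝ 𝕜, μ] g) ξ‖ₑ) ^ 2 ∂μ
  have hfin : 4 * (2 ^ s) ^ 2 * ENNReal.ofReal (h ^ (-d) * J) * A * B < ∞ := by finiteness
  refine ⟨hbound.trans_lt hfin, ?_⟩
  have hreal := ENNReal.toReal_mono hfin.ne hbound
  simp only [ENNReal.toReal_mul, ENNReal.toReal_pow, ← ENNReal.toReal_rpow, ENNReal.toReal_ofNat,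
    ENNReal.toReal_ofReal (by positivity : 0 ≤ h ^ (-d) * J)] at hreal
  calc L.toReal ^ (1 / 2 : ℝ)
      ≤ (4 * (2 ^ s) ^ 2 * J * h ^ (-d) * (A.toReal * B.toReal)) ^ (1 / 2 : ℝ) :=
        Real.rpow_le_rpow ENNReal.toReal_nonneg (hreal.trans_eq (by ring)) (by norm_num)
    _ = (4 * (2 ^ s) ^ 2 * J) ^ (1 / 2 : ℝ) * h ^ (-d / 2) *
          (A.toReal ^ (1 / 2 : ℝ) * B.toReal ^ (1 / 2 : ℝ)) := by
        rw [Real.mul_rpow (by positivity) (by positivity),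
          Real.mul_rpow (by positivity) (by positivity),
          Real.mul_rpow ENNReal.toReal_nonneg ENNReal.toReal_nonneg, ← Real.rpow_mul hh.le]
        ring_nf

end Sobolev

/-- the algebra property `‖uv‖_{H_h^s} ≤ C h^{-n/2} ‖u‖_{H_h^s} ‖v‖_{H_h^s}`
for `s > n/2`, stated on the Fourier side: with `f = û`, `g = v̂`, the Fourier transform of
the product `uv` is (up to normalization) the convolution `f ⋆ g`, and
`‖u‖_{H_h^s} = ‖⟨hξ⟩^s f‖_{L²}`. -/
theorem stmt_1 (n : ℕ) (s : ℝ) (hs : s > n / 2) :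
    ∃ C > 0, ∀ h : ℝ, h ∈ Set.Ioc (0 : ℝ) 1 →
      ∀ f g : EuclideanSpace ℝ (Fin n) → ℂ,
        AEStronglyMeasurable f volume → AEStronglyMeasurable g volume →
        Integrable (fun ξ => (1 + h ^ 2 * ‖ξ‖ ^ 2) ^ s * ‖f ξ‖ ^ 2) volume →
        Integrable (fun ξ => (1 + h ^ 2 * ‖ξ‖ ^ 2) ^ s * ‖g ξ‖ ^ 2) volume →
        Integrable (fun ξ =>
            (1 + h ^ 2 * ‖ξ‖ ^ 2) ^ s *
              ‖(f ⋆[ContinuousLinearMap.mul ℝ ℂ] g) ξ‖ ^ 2) volume ∧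
        (∫ ξ, (1 + h ^ 2 * ‖ξ‖ ^ 2) ^ s *
              ‖(f ⋆[ContinuousLinearMap.mul ℝ ℂ] g) ξ‖ ^ 2) ^ (1 / 2 : ℝ) ≤
          C * h ^ (-(n : ℝ) / 2) *
            ((∫ ξ, (1 + h ^ 2 * ‖ξ‖ ^ 2) ^ s * ‖f ξ‖ ^ 2) ^ (1 / 2 : ℝ) *
             (∫ ξ, (1 + h ^ 2 * ‖ξ‖ ^ 2) ^ s * ‖g ξ‖ ^ 2) ^ (1 / 2 : ℝ)) := by
  have hn : (Module.finrank ℝ (EuclideanSpace ℝ (Fin n)) : ℝ) < 2 * s := by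
    rw [finrank_euclideanSpace_fin]
    linarith
  have hJ := integral_one_add_norm_sq_rpow_neg_pos volume hn
  refine ⟨(4 * (2 ^ s) ^ 2 * ∫ ξ : EuclideanSpace ℝ (Fin n), (1 + ‖ξ‖ ^ 2) ^ (-s)) ^ (1 / 2 : ℝ),
    by positivity, fun h hh f g hf hg hfi hgi => ?_⟩
  simpa only [finrank_euclideanSpace_fin] using
    integrable_rpow_mul_norm_convolution_sq_and_le volume hn hh.1 hf hg hfi hgi
end

section
/- Let μ be a positive finite measure on [0,t_0] with μ([0,t]) ≤ C t^κ, κ ∈ (0,1]. Let χ ∈ C_0^∞([0,∞)) with χ ≥ 0 and χ(0) > 0, and assume s + αχ(s/α) > 0 for s ≥ 0, α > 0. Then ∫ ln(s + α χ(s/α)) dμ(s) = ∫ ln(s) dμ(s) + O(α^κ) as α → 0^+, and in particular ∫ |ln s| dμ(s) < ∞. -/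
open MeasureTheory Real Set

lemma helper13 (μ : Measure ℝ) [IsFiniteMeasure μ] (hμneg : μ (Set.Iio 0) = 0)
    (C κ A : ℝ) (hκ : 0 < κ) (hC : 0 ≤ C) (hA : 0 ≤ A)
    (hμ' : ∀ x : ℝ, 0 ≤ x → μ (Set.Icc 0 x) ≤ ENNReal.ofReal (C * x ^ κ))
    (f : ℝ → ℝ) (hf : AEMeasurable f μ) (hf0 : 0 ≤ᵐ[μ] f)
    (hsub : ∀ l : ℝ, 0 < l → {s : ℝ | l < f s} ⊆ Set.Iio 0 ∪ Set.Icc 0 (A * Real.exp (-l))) :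
    ∫⁻ s, ENNReal.ofReal (f s) ∂μ ≤ ENNReal.ofReal (C * A ^ κ / κ) := by
  rw [lintegral_eq_lintegral_meas_lt μ hf0 hf]
  have key : ∀ l ∈ Set.Ioi (0:ℝ),
      μ {s | l < f s} ≤ ENNReal.ofReal (C * A ^ κ * Real.exp (-κ * l)) := by
    intro l hl
    have h1 : μ {s | l < f s} ≤ μ (Set.Iio 0) + μ (Set.Icc 0 (A * Real.exp (-l))) :=
      (measure_mono (hsub l hl)).trans (measure_union_le _ _)
    rw [hμneg, zero_add] at h1
    refine h1.trans ((hμ' _ (by positivity)).trans (le_of_eq ?_))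
    congr 1
    rw [Real.mul_rpow hA (Real.exp_pos _).le,
      Real.rpow_def_of_pos (Real.exp_pos _), Real.log_exp]
    ring_nf
  have hInt : IntegrableOn (fun l : ℝ => C * A ^ κ * Real.exp (-κ * l)) (Set.Ioi 0) :=
    (exp_neg_integrableOn_Ioi 0 hκ).const_mul _
  calc ∫⁻ l in Set.Ioi 0, μ {s | l < f s}
      ≤ ∫⁻ l in Set.Ioi 0, ENNReal.ofReal (C * A ^ κ * Real.exp (-κ * l)) :=
        setLIntegral_mono (ENNReal.measurable_ofReal.comp
          (measurable_const.mul (Real.measurable_exp.comp (measurable_id.const_mul (-κ))))) key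
    _ = ENNReal.ofReal (∫ l in Set.Ioi 0, C * A ^ κ * Real.exp (-κ * l)) := by
        rw [ofReal_integral_eq_lintegral_ofReal hInt
          (ae_of_all _ fun l => by positivity)]
    _ = ENNReal.ofReal (C * A ^ κ / κ) := by
        congr 1
        rw [MeasureTheory.integral_const_mul]
        have : (∫ l in Set.Ioi (0:ℝ), Real.exp (-κ * l)) = κ⁻¹ := by
          have h := integral_comp_mul_left_Ioi (fun x => Real.exp (-x)) 0 hκ
          simp only [mul_zero, smul_eq_mul, integral_exp_neg_Ioi, neg_zero,
            Real.exp_zero, mul_one] at h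
          have heq : (fun x : ℝ => Real.exp (-(κ * x))) = fun x => Real.exp (-κ * x) := by
            funext x; ring_nf
          rw [← heq]; exact h
        rw [this]; ring

/-- if `μ` is a positive finite measure on `[0,t₀]` with `μ([0,t]) ≤ C t^κ`,
`κ ∈ (0,1]`, and `χ ∈ C_0^∞([0,∞))`, `χ ≥ 0`, `χ(0) > 0`, with `s + αχ(s/α) > 0` for
`s ≥ 0`, `α > 0`, then `ln s` is `μ`-integrable and
`∫ ln(s + αχ(s/α)) dμ(s) = ∫ ln(s) dμ(s) + O(α^κ)` as `α → 0⁺`. -/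
theorem stmt_13 (κ C t₀ : ℝ) (hκ : κ ∈ Set.Ioc (0 : ℝ) 1) (hC : 0 ≤ C) (ht₀ : 0 < t₀)
    (μ : Measure ℝ) [IsFiniteMeasure μ]
    (hμneg : μ (Set.Iio 0) = 0) (hμtop : μ (Set.Ioi t₀) = 0)
    (hμ : ∀ t ∈ Set.Icc (0 : ℝ) t₀, μ (Set.Icc 0 t) ≤ ENNReal.ofReal (C * t ^ κ))
    (χ : ℝ → ℝ) (hχ : ContDiff ℝ (⊤ : ℕ∞) χ) (hχc : HasCompactSupport χ)
    (hχ0 : ∀ s : ℝ, 0 ≤ s → 0 ≤ χ s) (hχpos : 0 < χ 0)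
    (hpos : ∀ s : ℝ, 0 ≤ s → ∀ α : ℝ, 0 < α → 0 < s + α * χ (s / α)) :
    Integrable (fun s => Real.log s) μ ∧
    ∃ C' > 0, ∀ α : ℝ, α ∈ Set.Ioc (0 : ℝ) 1 →
      Integrable (fun s => Real.log (s + α * χ (s / α))) μ ∧
      |(∫ s, Real.log (s + α * χ (s / α)) ∂μ) - ∫ s, Real.log s ∂μ| ≤ C' * α ^ κ := by
  obtain ⟨hκ0, hκ1⟩ := hκ
  -- μ {0} = 0
  have hμ0 : μ {(0:ℝ)} = 0 := by
    have h := hμ 0 ⟨le_refl 0, ht₀.le⟩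
    have : μ (Set.Icc (0:ℝ) 0) = μ {(0:ℝ)} := by norm_num
    rw [this, Real.zero_rpow hκ0.ne', mul_zero, ENNReal.ofReal_zero] at h
    exact le_antisymm h zero_le
  -- extended measure bound
  have hμ' : ∀ x : ℝ, 0 ≤ x → μ (Set.Icc 0 x) ≤ ENNReal.ofReal (C * x ^ κ) := by
    intro x hx
    rcases le_or_gt x t₀ with h | h
    · exact hμ x ⟨hx, h⟩
    · have hsub : Set.Icc (0:ℝ) x ⊆ Set.Icc 0 t₀ ∪ Set.Ioi t₀ := by
        intro s hs
        rcases le_or_gt s t₀ with h' | h'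
        · exact Or.inl ⟨hs.1, h'⟩
        · exact Or.inr h'
      calc μ (Set.Icc 0 x) ≤ μ (Set.Icc 0 t₀) + μ (Set.Ioi t₀) :=
            (measure_mono hsub).trans (measure_union_le _ _)
        _ ≤ ENNReal.ofReal (C * t₀ ^ κ) := by
            rw [hμtop, add_zero]; exact hμ t₀ ⟨ht₀.le, le_refl _⟩
        _ ≤ ENNReal.ofReal (C * x ^ κ) := ENNReal.ofReal_le_ofReal
            (mul_le_mul_of_nonneg_left (Real.rpow_le_rpow ht₀.le h.le hκ0.le) hC)
  -- a.e. facts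
  have hae : ∀ᵐ s ∂μ, s ∈ Set.Icc 0 t₀ := by
    have hc : (Set.Icc (0:ℝ) t₀)ᶜ ⊆ Set.Iio 0 ∪ Set.Ioi t₀ := by
      intro s hs
      simp only [Set.mem_compl_iff, Set.mem_Icc, not_and_or, not_le] at hs
      rcases hs with h | h
      · exact Or.inl h
      · exact Or.inr h
    have h0 : μ ((Set.Icc (0:ℝ) t₀)ᶜ) = 0 :=
      measure_mono_null hc (measure_union_null hμneg hμtop)
    rw [MeasureTheory.ae_iff]
    exact h0
  have haepos : ∀ᵐ s ∂μ, 0 < s := by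
    have hc : {s : ℝ | ¬ 0 < s} ⊆ Set.Iio 0 ∪ {(0:ℝ)} := by
      intro s hs
      simp only [Set.mem_setOf_eq, not_lt] at hs
      rcases lt_or_eq_of_le hs with h | h
      · exact Or.inl h
      · exact Or.inr (Set.mem_singleton_iff.mpr h)
    rw [MeasureTheory.ae_iff]
    exact measure_mono_null hc (measure_union_null hμneg hμ0)
  -- bound and support of χ
  obtain ⟨M₀, hM₀⟩ := hχc.exists_bound_of_continuous hχ.continuous
  set M : ℝ := max M₀ 1 with hMdef
  have hM1 : (1:ℝ) ≤ M := le_max_right _ _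
  have hM : ∀ x, χ x ≤ M :=
    fun x => ((le_abs_self _).trans ((hM₀ x).trans (le_max_left _ _)))
  obtain ⟨b, hb⟩ := hχc.isCompact.bddAbove
  set K : ℝ := max b 1 with hKdef
  have hK1 : (1:ℝ) ≤ K := le_max_right _ _
  have hKz : ∀ x : ℝ, K < x → χ x = 0 := by
    intro x hx
    apply image_eq_zero_of_notMem_tsupport
    intro hmem
    exact absurd (hb hmem) (not_le.mpr ((le_max_left b 1).trans_lt hx))
  -- integrability of log
  set A' : ℝ := max t₀ 1 with hA'def
  have hA'1 : (1:ℝ) ≤ A' := le_max_right _ _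
  have hA'pos : (0:ℝ) < A' := lt_of_lt_of_le one_pos hA'1
  have ht₀A' : t₀ ≤ A' := le_max_left _ _
  set f₀ : ℝ → ℝ := (Set.Icc 0 t₀).indicator (fun s => Real.log A' - Real.log s)
    with hf₀def
  have hlogle : ∀ s ∈ Set.Icc (0:ℝ) t₀, Real.log s ≤ Real.log A' := by
    intro s hs
    rcases eq_or_lt_of_le hs.1 with h0 | h0
    · rw [← h0, Real.log_zero]; exact Real.log_nonneg hA'1
    · exact Real.log_le_log h0 (hs.2.trans ht₀A')
  have hf₀nn : ∀ s, 0 ≤ f₀ s := by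
    intro s
    rw [hf₀def]
    by_cases hs : s ∈ Set.Icc (0:ℝ) t₀
    · rw [Set.indicator_of_mem hs]
      have := hlogle s hs; linarith
    · rw [Set.indicator_of_notMem hs]
  have hf₀meas : Measurable f₀ :=
    (measurable_const.sub Real.measurable_log).indicator measurableSet_Icc
  have hf₀sub : ∀ l : ℝ, 0 < l →
      {s : ℝ | l < f₀ s} ⊆ Set.Iio 0 ∪ Set.Icc 0 (A' * Real.exp (-l)) := by
    intro l hl s hs
    simp only [Set.mem_setOf_eq] at hs
    by_cases hmem : s ∈ Set.Icc (0:ℝ) t₀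
    · right
      rw [hf₀def, Set.indicator_of_mem hmem] at hs
      rcases eq_or_lt_of_le hmem.1 with h0 | h0
      · rw [← h0]
        exact ⟨le_refl _, by positivity⟩
      · refine ⟨hmem.1, ?_⟩
        have hlog : Real.log s < Real.log A' + (-l) := by linarith
        have h2 := Real.exp_lt_exp.mpr hlog
        rw [Real.exp_log h0, Real.exp_add, Real.exp_log hA'pos] at h2
        exact h2.le
    · rw [hf₀def, Set.indicator_of_notMem hmem] at hs; linarith
  have hf₀lint : ∫⁻ s, ENNReal.ofReal (f₀ s) ∂μ ≤ ENNReal.ofReal (C * A' ^ κ / κ) :=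
    helper13 μ hμneg C κ A' hκ0 hC hA'pos.le hμ' f₀ hf₀meas.aemeasurable
      (ae_of_all _ hf₀nn) hf₀sub
  have hf₀int : Integrable f₀ μ := by
    refine ⟨hf₀meas.aestronglyMeasurable, ?_⟩
    rw [hasFiniteIntegral_iff_ofReal (ae_of_all _ hf₀nn)]
    exact lt_of_le_of_lt hf₀lint ENNReal.ofReal_lt_top
  have hlogint : Integrable (fun s => Real.log s) μ := by
    refine Integrable.mono' ((integrable_const (Real.log A')).add hf₀int)
      Real.measurable_log.aestronglyMeasurable ?_
    filter_upwards [hae] with s hs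
    have hf₀s : f₀ s = Real.log A' - Real.log s := Set.indicator_of_mem hs _
    show |Real.log s| ≤ Real.log A' + f₀ s
    rw [hf₀s]
    have h1 := hlogle s hs
    have h2 : 0 ≤ Real.log A' := Real.log_nonneg hA'1
    rw [abs_le]; constructor <;> linarith
  refine ⟨hlogint, C * (K + M) ^ κ / κ + 1, by positivity, ?_⟩
  intro α hα
  obtain ⟨hα0, hα1⟩ := hα
  set A : ℝ := (K + M) * α with hAdef
  have hKM : (0:ℝ) < K + M := by linarith
  have hApos : 0 < A := mul_pos hKM hα0
  set F : ℝ → ℝ := fun s => Real.log (s + α * χ (s / α)) with hFdef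
  have hFmeas : Measurable F :=
    Real.measurable_log.comp (measurable_id.add
      (measurable_const.mul (hχ.continuous.measurable.comp (measurable_id.div_const α))))
  have hFger : ∀ s : ℝ, 0 < s → Real.log s ≤ F s := by
    intro s hs
    apply Real.log_le_log hs
    have : 0 ≤ α * χ (s / α) :=
      mul_nonneg hα0.le (hχ0 _ (div_nonneg hs.le hα0.le))
    linarith
  have hFint : Integrable F μ := by
    refine Integrable.mono'
      (g := fun s => |Real.log s| + |Real.log (t₀ + M)|)
      (hlogint.abs.add (integrable_const _)) hFmeas.aestronglyMeasurable ?_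
    filter_upwards [hae, haepos] with s hs hs0
    rw [Real.norm_eq_abs]
    have h1 := hFger s hs0
    have h2 : F s ≤ Real.log (t₀ + M) := by
      apply Real.log_le_log (hpos s hs0.le α hα0)
      have hχb : χ (s / α) ≤ M := hM _
      have : α * χ (s / α) ≤ 1 * M := by
        apply mul_le_mul hα1 hχb (hχ0 _ (div_nonneg hs0.le hα0.le)) zero_le_one
      have := hs.2
      linarith
    have h3 := neg_abs_le (Real.log s)
    have h4 := le_abs_self (Real.log (t₀ + M))
    have h5 := abs_nonneg (Real.log s)
    have h6 := abs_nonneg (Real.log (t₀ + M))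
    rw [abs_le]; constructor <;> linarith
  set g : ℝ → ℝ := fun s => F s - Real.log s with hgdef
  have hgmeas : Measurable g := hFmeas.sub Real.measurable_log
  have hgnn : 0 ≤ᵐ[μ] g := by
    filter_upwards [haepos] with s hs
    have := hFger s hs
    simp only [hgdef, Pi.zero_apply]
    linarith
  have hgsub : ∀ l : ℝ, 0 < l →
      {s : ℝ | l < g s} ⊆ Set.Iio 0 ∪ Set.Icc 0 (A * Real.exp (-l)) := by
    intro l hl s hs
    simp only [Set.mem_setOf_eq, hgdef, hFdef] at hs
    rcases lt_or_ge s 0 with hsneg | hs0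
    · exact Or.inl hsneg
    right
    rcases eq_or_lt_of_le hs0 with h0 | h0
    · rw [← h0]; exact ⟨le_refl _, by positivity⟩
    have hsK : s ≤ K * α := by
      by_contra hcon
      push_neg at hcon
      have hz : χ (s / α) = 0 := hKz _ ((lt_div_iff₀ hα0).mpr hcon)
      rw [hz, mul_zero, add_zero, sub_self] at hs
      linarith
    have hyA : s + α * χ (s / α) ≤ A := by
      have h1 : χ (s / α) ≤ M := hM _
      have h2 : α * χ (s / α) ≤ α * M := mul_le_mul_of_nonneg_left h1 hα0.le
      rw [hAdef]; nlinarith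
    have hlA : Real.log (s + α * χ (s / α)) ≤ Real.log A :=
      Real.log_le_log (hpos s hs0 α hα0) hyA
    have hlog : Real.log s < Real.log A + (-l) := by linarith
    have h2 := Real.exp_lt_exp.mpr hlog
    rw [Real.exp_log h0, Real.exp_add, Real.exp_log hApos] at h2
    exact ⟨hs0, h2.le⟩
  have hglint : ∫⁻ s, ENNReal.ofReal (g s) ∂μ ≤ ENNReal.ofReal (C * A ^ κ / κ) :=
    helper13 μ hμneg C κ A hκ0 hC hApos.le hμ' g hgmeas.aemeasurable hgnn hgsub
  have hgint : Integrable g μ := hFint.sub hlogint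
  have hgval : ∫ s, g s ∂μ = (∫⁻ s, ENNReal.ofReal (g s) ∂μ).toReal :=
    MeasureTheory.integral_eq_lintegral_of_nonneg_ae hgnn hgmeas.aestronglyMeasurable
  have hgle : ∫ s, g s ∂μ ≤ C * A ^ κ / κ := by
    rw [hgval]
    calc (∫⁻ s, ENNReal.ofReal (g s) ∂μ).toReal
        ≤ (ENNReal.ofReal (C * A ^ κ / κ)).toReal :=
          ENNReal.toReal_mono ENNReal.ofReal_ne_top hglint
      _ ≤ C * A ^ κ / κ := by rw [ENNReal.toReal_ofReal']; exact max_le (le_refl _) (by positivity)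
  refine ⟨hFint, ?_⟩
  have hdiff : (∫ s, Real.log (s + α * χ (s / α)) ∂μ) - ∫ s, Real.log s ∂μ
      = ∫ s, g s ∂μ := by
    rw [hgdef, hFdef]
    exact (integral_sub hFint hlogint).symm
  rw [hdiff, abs_of_nonneg (integral_nonneg_of_ae hgnn)]
  have hAκ : A ^ κ = (K + M) ^ κ * α ^ κ := Real.mul_rpow hKM.le hα0.le
  have hακ : (0:ℝ) ≤ α ^ κ := Real.rpow_nonneg hα0.le _
  calc ∫ s, g s ∂μ ≤ C * A ^ κ / κ := hgle
    _ = C * (K + M) ^ κ / κ * α ^ κ := by rw [hAκ]; ring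
    _ ≤ (C * (K + M) ^ κ / κ + 1) * α ^ κ := by
        apply mul_le_mul_of_nonneg_right _ hακ
        linarith
end
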